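/- arXiv:2011.13723 — 2 statements merged into one kernel-verified Lean document; each statement's English description precedes it below -/
import Mathlib

section
/- Fix $\theta > 1$ and an integer $N\ge 1$. For $1\le i\le N$ define $r_i = 1+\sqrt{1-(i-1)/(N\theta^2)}$. Then there exist positive constants $c, C$ (independent of $i$ and $N$) such that for all $3\le i\le N$, $\left| r_{i-1} - r_i - \frac{1}{2N\theta^2(r_i-1)} \right|$ lies between $\frac{c}{N^2\theta^4 (r_i-1)^3}$ and $\frac{C}{N^2\theta^4 (r_i-1)^3}$. -/
/-!
With `h = 1 / (N θ²)` and `x = 1 - (i - 1) h` we have `r i = 1 + √x` and `r (i - 1) = 1 + √(x + h)`,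
so the error is the second-order Taylor remainder of `√` at `x`. Rationalising
`√(x + h) - √x = h / (√(x + h) + √x)` shows that it equals exactly
`-h² / (2 √x (√(x + h) + √x)²)`. As `√x ≤ √(x + h) ≤ 1`, the denominator lies between `8 √x³`
and `8 √x`, and `√x ≥ √(1 - θ⁻²)` (because `i ≤ N`) turns `8 √x` into a multiple of `√x³`.
-/

open Real

section SqrtTaylor

variable {x h : ℝ}

theorem sqrt_add_sub_sqrt_sub_div_eq (hx : 0 < x) (hh : 0 ≤ h) :
    √(x + h) - √x - h / (2 * √x) = -(h ^ 2 / (2 * √x * (√(x + h) + √x) ^ 2)) := by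
  have hs : 0 < √x := sqrt_pos.mpr hx
  have hts : 0 < √(x + h) + √x := by positivity
  have hdiff : √(x + h) ^ 2 - √x ^ 2 = h := by
    rw [sq_sqrt hx.le, sq_sqrt (by linarith)]; ring
  field_simp
  linear_combination (2 * √x * (√(x + h) + √x) - h) * hdiff

theorem abs_sqrt_add_sub_sqrt_sub_div_le (hx : 0 < x) (hh : 0 ≤ h) :
    |√(x + h) - √x - h / (2 * √x)| ≤ h ^ 2 / (8 * √x ^ 3) := by
  have hs : 0 < √x := sqrt_pos.mpr hx
  have hmono : 2 * √x ≤ √(x + h) + √x := by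
    have := sqrt_le_sqrt (show x ≤ x + h by linarith); linarith
  rw [sqrt_add_sub_sqrt_sub_div_eq hx hh, abs_neg, abs_of_nonneg (by positivity)]
  gcongr h ^ 2 / ?_
  calc 8 * √x ^ 3 = 2 * √x * (2 * √x) ^ 2 := by ring
    _ ≤ 2 * √x * (√(x + h) + √x) ^ 2 := by gcongr

theorem div_le_abs_sqrt_add_sub_sqrt_sub_div (hx : 0 < x) (hh : 0 ≤ h) (hxh : x + h ≤ 1) :
    h ^ 2 / (8 * √x) ≤ |√(x + h) - √x - h / (2 * √x)| := by
  have hs : 0 < √x := sqrt_pos.mpr hx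
  have hbound : √(x + h) + √x ≤ 2 := by
    have := sqrt_le_one.mpr hxh
    have := sqrt_le_sqrt (show x ≤ x + h by linarith)
    linarith
  rw [sqrt_add_sub_sqrt_sub_div_eq hx hh, abs_neg, abs_of_nonneg (by positivity)]
  gcongr h ^ 2 / ?_
  calc 2 * √x * (√(x + h) + √x) ^ 2 ≤ 2 * √x * 2 ^ 2 := by gcongr
    _ = 8 * √x := by ring

end SqrtTaylor

theorem one_sub_natCast_pred_sub_one_div (D : ℝ) {i : ℕ} (hi : 1 ≤ i) :
    1 - (((i - 1 : ℕ) : ℝ) - 1) / D = 1 - ((i : ℝ) - 1) / D + 1 / D := by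
  rw [Nat.cast_sub hi]; ring

/-- Two-sided estimate for the error in the expansion
`r (i-1) - r i ≈ 1/(2 N θ² (r i - 1))`, with constants independent of `i` and `N`. -/
theorem r_difference_expansion
    (θ : ℝ) (hθ : 1 < θ) :
    ∃ c > (0 : ℝ), ∃ C > (0 : ℝ),
      ∀ (N : ℕ), 1 ≤ N →
        ∀ r : ℕ → ℝ,
          (∀ i : ℕ, r i = 1 + Real.sqrt (1 - ((i : ℝ) - 1) / (N * θ ^ 2))) →
          ∀ i : ℕ, 3 ≤ i → i ≤ N →
            c / (N ^ 2 * θ ^ 4 * (r i - 1) ^ 3)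
              ≤ |r (i - 1) - r i - 1 / (2 * N * θ ^ 2 * (r i - 1))| ∧
            |r (i - 1) - r i - 1 / (2 * N * θ ^ 2 * (r i - 1))|
              ≤ C / (N ^ 2 * θ ^ 4 * (r i - 1) ^ 3) := by
  have hθ2 : 1 / θ ^ 2 < 1 := (div_lt_one (by positivity)).mpr (by nlinarith)
  refine ⟨(1 - 1 / θ ^ 2) / 8, by linarith, 1 / 8, by norm_num, ?_⟩
  intro N hN r hr i hi3 hiN
  have hD : (0 : ℝ) < N * θ ^ 2 := by positivity
  have hi3' : (3 : ℝ) ≤ i := by exact_mod_cast hi3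
  have hiN' : (i : ℝ) ≤ N := by exact_mod_cast hiN
  obtain ⟨h, h_def⟩ : ∃ h : ℝ, h = 1 / (N * θ ^ 2) := ⟨_, rfl⟩
  obtain ⟨x, x_def⟩ : ∃ x : ℝ, x = 1 - ((i : ℝ) - 1) / (N * θ ^ 2) := ⟨_, rfl⟩
  have hh : 0 ≤ h := by rw [h_def]; positivity
  have hxh : x + h ≤ 1 := by
    rw [x_def, h_def, ← sub_nonneg]; field_simp; linarith
  have hx : 1 - 1 / θ ^ 2 ≤ x := by
    rw [x_def, ← sub_nonneg]; field_simp; nlinarith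
  have hx0 : 0 < x := by linarith
  have hs : √x ≠ 0 := (sqrt_pos.mpr hx0).ne'
  have hri : r i - 1 = √x := by rw [hr, x_def, add_sub_cancel_left]
  have hri1 : r (i - 1) - r i = √(x + h) - √x := by
    rw [hr, hr, one_sub_natCast_pred_sub_one_div _ (by omega), x_def, h_def]; ring
  have herr : r (i - 1) - r i - 1 / (2 * N * θ ^ 2 * (r i - 1))
      = √(x + h) - √x - h / (2 * √x) := by
    rw [hri1, hri, h_def]; field_simp
  have hscale (c : ℝ) : c / (N ^ 2 * θ ^ 4 * (r i - 1) ^ 3) = c * h ^ 2 / √x ^ 3 := by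
    rw [hri, h_def]; field_simp
  rw [herr, hscale, hscale]
  constructor
  · calc (1 - 1 / θ ^ 2) / 8 * h ^ 2 / √x ^ 3 ≤ √x ^ 2 / 8 * h ^ 2 / √x ^ 3 := by
          rw [sq_sqrt hx0.le]; gcongr
      _ = h ^ 2 / (8 * √x) := by field_simp
      _ ≤ _ := div_le_abs_sqrt_add_sub_sqrt_sub_div hx0 hh hxh
  · calc _ ≤ h ^ 2 / (8 * √x ^ 3) := abs_sqrt_add_sub_sqrt_sub_div_le hx0 hh
      _ = 1 / 8 * h ^ 2 / √x ^ 3 := by ring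
end

section
/- Let $\theta_N = 1 + N^{-2/3} w_N$ where $w_N \to \infty$ with $w_N = o(\log^2 N)$, and define $\gamma_i = \frac{1-\sqrt{1-(i-1)/(N\theta_N^2)}}{1+\sqrt{1-(i-1)/(N\theta_N^2)}}$. Then for all sufficiently large $N$: for any indices $i, j$ with $N - (\theta_N^2 N)^{1/3}\log^3 N \le i < j \le i + (\theta_N^2 N)^{1/3}\log^{-2} N$ and $j \le N$, the product satisfies $\gamma_{i+1}\gamma_{i+2}\cdots\gamma_j \ge 1/2$. -/
/-!
Write `B = N θ_N²`, `A = B^{1/3}`, `L = log N`, `n = j - i` and `a = √(1 - i/B)`. For `k > i` the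
square root in `γ_k = (1 - s_k)/(1 + s_k)` satisfies `s_k ≤ a`, so `γ_k ≥ 1 - 2a`, and Bernoulli's
inequality gives `γ_{i+1} ⋯ γ_j ≥ 1 - 2an`. Since `B - N = N(θ_N² - 1) ≤ 3 w_N N^{1/3} ≤ 3 L² A`,
the window conditions give `B - i ≤ A(3L² + L³)` and `n ≤ A/L²`, hence `a²n² ≤ (B - i)/(A L⁴) ≤ 4/L`,
which is at most `1/16` as soon as `L ≥ 64`.
-/

open Filter Finset

lemma one_sub_two_mul_le_div_one_add {s : ℝ} (hs : 0 ≤ s) : 1 - 2 * s ≤ (1 - s) / (1 + s) := by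
  rw [le_div_iff₀ (by linarith)]
  nlinarith [sq_nonneg s]

lemma one_sub_card_mul_le_prod {ι : Type*} (s : Finset ι) {f : ι → ℝ} {c : ℝ} (hc1 : c ≤ 1)
    (hf : ∀ k ∈ s, 1 - c ≤ f k) : 1 - #s * c ≤ ∏ k ∈ s, f k :=
  calc 1 - #s * c = 1 + #s * (-c) := by ring
    _ ≤ (1 + -c) ^ #s := one_add_mul_le_pow (by linarith) _
    _ = ∏ _k ∈ s, (1 - c) := by rw [prod_const, sub_eq_add_neg]
    _ ≤ ∏ k ∈ s, f k := prod_le_prod (fun _ _ => by linarith) hf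

lemma one_sub_two_sqrt_le_div {B x y : ℝ} (hB : 0 < B) (hxy : x ≤ y) :
    1 - 2 * √(1 - x / B) ≤ (1 - √(1 - y / B)) / (1 + √(1 - y / B)) := by
  have hs : √(1 - y / B) ≤ √(1 - x / B) := Real.sqrt_le_sqrt (by gcongr)
  linarith [one_sub_two_mul_le_div_one_add (Real.sqrt_nonneg (1 - y / B))]

lemma one_sub_two_sqrt_mul_le_prod {B : ℝ} (hB : 0 < B) {i : ℕ} (ha : √(1 - i / B) ≤ 1 / 2)
    (j : ℕ) : 1 - 2 * √(1 - i / B) * (j - i : ℕ) ≤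
      ∏ k ∈ Icc (i + 1) j, (1 - √(1 - ((k : ℝ) - 1) / B)) / (1 + √(1 - ((k : ℝ) - 1) / B)) := by
  have hcard : #(Icc (i + 1) j) = j - i := by rw [Nat.card_Icc]; omega
  have hfactor : ∀ k ∈ Icc (i + 1) j, 1 - 2 * √(1 - i / B) ≤
      (1 - √(1 - ((k : ℝ) - 1) / B)) / (1 + √(1 - ((k : ℝ) - 1) / B)) := by
    intro k hk
    have hik : (i : ℝ) + 1 ≤ k := by exact_mod_cast (mem_Icc.mp hk).1
    exact one_sub_two_sqrt_le_div hB (by linarith)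
  have key := one_sub_card_mul_le_prod (Icc (i + 1) j) (by linarith) hfactor
  rw [hcard] at key
  linarith

lemma cube_mul_one_add_div_sq_sq_sub_one_le {t w : ℝ} (ht : 0 < t) (hw : 0 ≤ w)
    (hwt : w ≤ t ^ 2) : t ^ 3 * ((1 + w / t ^ 2) ^ 2 - 1) ≤ 3 * w * t := by
  have hexpand : t ^ 3 * ((1 + w / t ^ 2) ^ 2 - 1) = 2 * w * t + w ^ 2 / t := by
    field_simp
    ring
  have hsq : w ^ 2 / t ≤ w * t := by
    rw [div_le_iff₀ ht]
    nlinarith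
  linarith

lemma one_sub_div_cube_mul_sq_le {A D L x n : ℝ} (hA : 0 < A) (hL : 0 < L) (hx : x ≤ A ^ 3)
    (hxD : A ^ 3 - x ≤ A * D) (hn0 : 0 ≤ n) (hn : n * L ^ 2 ≤ A) :
    (1 - x / A ^ 3) * n ^ 2 ≤ D / L ^ 4 := by
  have hnL : (n * L ^ 2) ^ 2 ≤ A ^ 2 := pow_le_pow_left₀ (by positivity) hn 2
  rw [one_sub_div (by positivity), div_mul_eq_mul_div,
    div_le_div_iff₀ (by positivity) (by positivity)]
  calc (A ^ 3 - x) * n ^ 2 * L ^ 4 = (A ^ 3 - x) * (n * L ^ 2) ^ 2 := by ring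
    _ ≤ (A ^ 3 - x) * A ^ 2 := mul_le_mul_of_nonneg_left hnL (by linarith)
    _ ≤ A * D * A ^ 2 := mul_le_mul_of_nonneg_right hxD (by positivity)
    _ = D * A ^ 3 := by ring

lemma rpow_one_div_three_pow_three {x : ℝ} (hx : 0 ≤ x) : (x ^ ((1 : ℝ) / 3)) ^ 3 = x := by
  simpa [one_div] using Real.rpow_inv_natCast_pow hx (n := 3) (by norm_num)

lemma one_sub_div_mul_sq_le_of_edge_window {N θ w L x n : ℝ} (hN : 0 < N)
    (hθ : θ = 1 + N ^ (-(2 : ℝ) / 3) * w) (hw : 0 ≤ w) (hwL : w ≤ L ^ 2) (hL : 1 ≤ L)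
    (hLN : L ≤ N ^ ((1 : ℝ) / 3))
    (hx : N - (θ ^ 2 * N) ^ ((1 : ℝ) / 3) * L ^ 3 ≤ x) (hxN : x ≤ N)
    (hn0 : 0 ≤ n) (hn : n ≤ (θ ^ 2 * N) ^ ((1 : ℝ) / 3) * L ^ (-(2 : ℝ))) :
    (1 - x / (N * θ ^ 2)) * n ^ 2 ≤ 4 / L := by
  set t := N ^ ((1 : ℝ) / 3)
  set A := (θ ^ 2 * N) ^ ((1 : ℝ) / 3)
  have ht : 0 < t := by positivity
  have htN : t ^ 3 = N := rpow_one_div_three_pow_three hN.le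
  have hθt : θ = 1 + w / t ^ 2 := by
    rw [hθ, show -(2 : ℝ) / 3 = (1 / 3) * -2 by norm_num, Real.rpow_mul hN.le, Real.rpow_neg ht.le,
      Real.rpow_two, inv_mul_eq_div]
  have hθ1 : 1 ≤ θ := by
    rw [hθt]
    exact le_add_of_nonneg_right (by positivity)
  have hNB : N ≤ θ ^ 2 * N := le_mul_of_one_le_left hN.le (one_le_pow₀ hθ1)
  have hA3 : A ^ 3 = θ ^ 2 * N := rpow_one_div_three_pow_three (by positivity)
  have htA : t ≤ A := Real.rpow_le_rpow hN.le hNB (by norm_num)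
  have hwt : w ≤ t ^ 2 := hwL.trans (pow_le_pow_left₀ (by linarith) hLN 2)
  have hBN : θ ^ 2 * N - N ≤ 3 * L ^ 2 * A :=
    calc θ ^ 2 * N - N = t ^ 3 * ((1 + w / t ^ 2) ^ 2 - 1) := by rw [hθt, htN]; ring
      _ ≤ 3 * w * t := cube_mul_one_add_div_sq_sq_sub_one_le ht hw hwt
      _ ≤ 3 * L ^ 2 * A := by gcongr
  have hnL : n * L ^ 2 ≤ A := by
    rw [Real.rpow_neg (by linarith), Real.rpow_two] at hn
    rwa [← le_div_iff₀ (by positivity)]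
  have hbound := one_sub_div_cube_mul_sq_le (x := x) (D := 3 * L ^ 2 + L ^ 3) (ht.trans_le htA)
    (by linarith) (by linarith) (by rw [hA3]; linarith) hn0 hnL
  rw [hA3, mul_comm (θ ^ 2)] at hbound
  refine hbound.trans ?_
  rw [div_le_div_iff₀ (by positivity) (by positivity)]
  nlinarith [pow_le_pow_left₀ zero_le_one hL 2]

lemma half_le_prod_of_edge_window {N θ w L : ℝ} {i j : ℕ} (hN : 0 < N)
    (hθ : θ = 1 + N ^ (-(2 : ℝ) / 3) * w) (hw : 0 ≤ w) (hwL : w ≤ L ^ 2) (hL : 64 ≤ L)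
    (hLN : L ≤ N ^ ((1 : ℝ) / 3))
    (hi : N - (θ ^ 2 * N) ^ ((1 : ℝ) / 3) * L ^ 3 ≤ i) (hij : i < j)
    (hj : (j : ℝ) ≤ i + (θ ^ 2 * N) ^ ((1 : ℝ) / 3) * L ^ (-(2 : ℝ))) (hjN : (j : ℝ) ≤ N) :
    1 / 2 ≤ ∏ k ∈ Icc (i + 1) j,
      (1 - √(1 - ((k : ℝ) - 1) / (N * θ ^ 2))) / (1 + √(1 - ((k : ℝ) - 1) / (N * θ ^ 2))) := by
  have hθ1 : 1 ≤ θ := by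
    rw [hθ]
    exact le_add_of_nonneg_right (by positivity)
  set a := √(1 - i / (N * θ ^ 2))
  set n : ℝ := ((j - i : ℕ) : ℝ)
  have hij' : (i : ℝ) + 1 ≤ j := by exact_mod_cast hij
  have hn : n = j - i := by simp [n, Nat.cast_sub hij.le]
  have hsq := one_sub_div_mul_sq_le_of_edge_window hN hθ hw hwL (by linarith) hLN hi
    (x := i) (n := n) (by linarith) (by linarith) (by linarith)
  have han : a * n ≤ 1 / 4 :=
    calc a * n = √((1 - i / (N * θ ^ 2)) * n ^ 2) := by
          rw [Real.sqrt_mul' _ (sq_nonneg n), Real.sqrt_sq (by linarith)]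
      _ ≤ √((1 / 4) ^ 2) := by
          refine Real.sqrt_le_sqrt (hsq.trans ?_)
          rw [div_le_iff₀ (by linarith)]
          linarith
      _ = 1 / 4 := Real.sqrt_sq (by norm_num)
  have ha : a ≤ 1 / 2 := by nlinarith [Real.sqrt_nonneg (1 - i / (N * θ ^ 2))]
  linarith [one_sub_two_sqrt_mul_le_prod (by positivity) ha j]

theorem gamma_product_lower_bound_general
    (w : ℕ → ℝ) (hwpos : ∀ N, 0 < w N)
    (hwo : w =o[atTop] fun N : ℕ => (Real.log N) ^ 2)
    (θ : ℕ → ℝ) (hθ : ∀ N : ℕ, θ N = 1 + (N : ℝ) ^ (-(2 : ℝ) / 3) * w N)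
    (γ : ℕ → ℕ → ℝ)
    (hγ : ∀ N k : ℕ, γ N k =
      (1 - Real.sqrt (1 - ((k : ℝ) - 1) / (N * θ N ^ 2))) /
      (1 + Real.sqrt (1 - ((k : ℝ) - 1) / (N * θ N ^ 2)))) :
    ∀ᶠ N : ℕ in atTop, ∀ i j : ℕ,
      (N : ℝ) - (θ N ^ 2 * N) ^ ((1 : ℝ) / 3) * (Real.log N) ^ 3 ≤ (i : ℝ) →
      i < j →
      (j : ℝ) ≤ (i : ℝ) + (θ N ^ 2 * N) ^ ((1 : ℝ) / 3) * (Real.log N) ^ (-(2 : ℝ)) →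
      j ≤ N →
      (1 : ℝ) / 2 ≤ ∏ k ∈ Finset.Icc (i + 1) j, γ N k := by
  have hwL : ∀ᶠ N : ℕ in atTop, w N ≤ Real.log N ^ 2 := by
    filter_upwards [hwo.bound one_pos] with N h
    rw [one_mul, Real.norm_of_nonneg (sq_nonneg _)] at h
    exact (le_abs_self _).trans h
  have hLN : ∀ᶠ N : ℕ in atTop, Real.log N ≤ (N : ℝ) ^ ((1 : ℝ) / 3) := by
    filter_upwards [tendsto_natCast_atTop_atTop.eventually
      ((isLittleO_log_rpow_atTop (by norm_num : (0 : ℝ) < 1 / 3)).bound one_pos)] with N h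
    rw [one_mul, Real.norm_eq_abs, Real.norm_of_nonneg (by positivity)] at h
    exact (le_abs_self _).trans h
  have hL : ∀ᶠ N : ℕ in atTop, 64 ≤ Real.log N :=
    (Real.tendsto_log_atTop.comp tendsto_natCast_atTop_atTop).eventually_ge_atTop 64
  filter_upwards [hwL, hLN, hL, eventually_gt_atTop 0] with N hwN hLN hL hN i j hi hij hj hjN
  simp_rw [hγ]
  exact half_le_prod_of_edge_window (by exact_mod_cast hN) (hθ N) (hwpos N).le hwN hL hLN hi hij hj
    (by exact_mod_cast hjN)

/-- Products of consecutive `γ`'s close to the edge stay above `1/2`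
(Lemma on γ products for `θ_N = 1 + N^{-2/3} w_N`, `w_N → ∞`, `w_N ≪ log² N`). -/
theorem gamma_product_lower_bound
    (w : ℕ → ℝ) (hwpos : ∀ N, 0 < w N)
    (hwinf : Tendsto w atTop atTop)
    (hwo : w =o[atTop] fun N : ℕ => (Real.log N) ^ 2)
    (θ : ℕ → ℝ) (hθ : ∀ N : ℕ, θ N = 1 + (N : ℝ) ^ (-(2 : ℝ) / 3) * w N)
    (γ : ℕ → ℕ → ℝ)
    (hγ : ∀ N k : ℕ, γ N k =
      (1 - Real.sqrt (1 - ((k : ℝ) - 1) / (N * θ N ^ 2))) /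
      (1 + Real.sqrt (1 - ((k : ℝ) - 1) / (N * θ N ^ 2)))) :
    ∀ᶠ N : ℕ in atTop, ∀ i j : ℕ,
      (N : ℝ) - (θ N ^ 2 * N) ^ ((1 : ℝ) / 3) * (Real.log N) ^ 3 ≤ (i : ℝ) →
      i < j →
      (j : ℝ) ≤ (i : ℝ) + (θ N ^ 2 * N) ^ ((1 : ℝ) / 3) * (Real.log N) ^ (-(2 : ℝ)) →
      j ≤ N →
      (1 : ℝ) / 2 ≤ ∏ k ∈ Finset.Icc (i + 1) j, γ N k :=
  gamma_product_lower_bound_general w hwpos hwo θ hθ γ hγ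
end
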